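/- Let θ_φ be the ring automorphism of R that interchanges u₀^{1/2} and v₁^{1/2} and fixes q^{1/4}, u₁^{1/2}, v₀^{1/2}. There exists a unique ring anti-automorphism φ of H (φ(a·b) = φ(b)·φ(a)), semilinear over θ_φ, with φ(U₀) = V₁, φ(V₁) = U₀, φ(U₁) = U₁, φ(V₀) = V₀. It satisfies φ(𝕏) = 𝕐⁻¹, φ(𝕐) = 𝕏⁻¹, φ ∘ φ = id, and, with τ₊, τ₋ the semilinear automorphisms of H determined respectively by (U₁ ↦ U₁, V₁ ↦ V₁, U₀ ↦ q^{−1/4}·𝕏·U₀⁻¹, V₀ ↦ q^{−1/4}·𝕏·V₀⁻¹, over the swap u₀^{1/2} ↔ v₀^{1/2}) and (U₀ ↦ U₀, U₁ ↦ U₁, V₁ ↦ q^{−1/4}·V₁⁻¹·𝕐⁻¹, V₀ ↦ V₀⁻¹·V₁·V₀, over the swap v₀^{1/2} ↔ v₁^{1/2}), one has φ ∘ τ₊ ∘ φ = τ₋ and φ ∘ τ₋ ∘ φ = τ₊. -/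

import Mathlib

noncomputable section

/-- The base ring `R = ℤ[q^{±1/4}, u₀^{±1/2}, u₁^{±1/2}, v₀^{±1/2}, v₁^{±1/2}]`:
the group algebra over `ℤ` of the free abelian group on five generators, where the
exponents record the variables `(q^{1/4}, u₀^{1/2}, u₁^{1/2}, v₀^{1/2}, v₁^{1/2})`. -/
abbrev R5 : Type := AddMonoidAlgebra ℤ (ℤ × ℤ × ℤ × ℤ × ℤ)

namespace R5
/-- `q^{1/4}` -/
def q4 : R5 := AddMonoidAlgebra.single (1, 0, 0, 0, 0) 1
/-- `q^{-1/4}` -/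
def q4i : R5 := AddMonoidAlgebra.single (-1, 0, 0, 0, 0) 1
/-- `u₀^{1/2}` -/
def u0h : R5 := AddMonoidAlgebra.single (0, 1, 0, 0, 0) 1
def u0hi : R5 := AddMonoidAlgebra.single (0, -1, 0, 0, 0) 1
/-- `u₁^{1/2}` -/
def u1h : R5 := AddMonoidAlgebra.single (0, 0, 1, 0, 0) 1
def u1hi : R5 := AddMonoidAlgebra.single (0, 0, -1, 0, 0) 1
/-- `v₀^{1/2}` -/
def v0h : R5 := AddMonoidAlgebra.single (0, 0, 0, 1, 0) 1
def v0hi : R5 := AddMonoidAlgebra.single (0, 0, 0, -1, 0) 1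
/-- `v₁^{1/2}` -/
def v1h : R5 := AddMonoidAlgebra.single (0, 0, 0, 0, 1) 1
def v1hi : R5 := AddMonoidAlgebra.single (0, 0, 0, 0, -1) 1
end R5

/-- Generators `U₀, U₁, V₀, V₁` of the `C∨C₁` DAHA. -/
inductive Cgen : Type
  | u0 | u1 | v0 | v1

open FreeAlgebra in
/-- The defining relations of the DAHA of type `C∨C₁`:
`(U_i − u_i^{1/2})(U_i + u_i^{−1/2}) = 0`, `(V_i − v_i^{1/2})(V_i + v_i^{−1/2}) = 0`
for `i = 0, 1`, and `q^{1/4}·V₁·V₀·U₀·U₁ = 1`. -/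
inductive Crel : FreeAlgebra R5 Cgen → FreeAlgebra R5 Cgen → Prop
  | heckeU0 : Crel ((ι R5 Cgen.u0 - algebraMap R5 _ R5.u0h) *
      (ι R5 Cgen.u0 + algebraMap R5 _ R5.u0hi)) 0
  | heckeU1 : Crel ((ι R5 Cgen.u1 - algebraMap R5 _ R5.u1h) *
      (ι R5 Cgen.u1 + algebraMap R5 _ R5.u1hi)) 0
  | heckeV0 : Crel ((ι R5 Cgen.v0 - algebraMap R5 _ R5.v0h) *
      (ι R5 Cgen.v0 + algebraMap R5 _ R5.v0hi)) 0
  | heckeV1 : Crel ((ι R5 Cgen.v1 - algebraMap R5 _ R5.v1h) *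
      (ι R5 Cgen.v1 + algebraMap R5 _ R5.v1hi)) 0
  | unit : Crel (algebraMap R5 _ R5.q4 * ι R5 Cgen.v1 * ι R5 Cgen.v0 *
      ι R5 Cgen.u0 * ι R5 Cgen.u1) 1

/-- The DAHA of type `C∨C₁`. -/
abbrev H : Type := RingQuot Crel

namespace H

def U0 : H := RingQuot.mkAlgHom R5 Crel (FreeAlgebra.ι R5 Cgen.u0)
def U1 : H := RingQuot.mkAlgHom R5 Crel (FreeAlgebra.ι R5 Cgen.u1)
def V0 : H := RingQuot.mkAlgHom R5 Crel (FreeAlgebra.ι R5 Cgen.v0)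
def V1 : H := RingQuot.mkAlgHom R5 Crel (FreeAlgebra.ι R5 Cgen.v1)

/-- image of a base-ring element in `H` -/
def c (r : R5) : H := algebraMap R5 H r

/-- `U₀⁻¹ = U₀ − u₀^{1/2} + u₀^{−1/2}` -/
def U0i : H := U0 - c R5.u0h + c R5.u0hi
/-- `U₁⁻¹ = U₁ − u₁^{1/2} + u₁^{−1/2}` -/
def U1i : H := U1 - c R5.u1h + c R5.u1hi
/-- `V₀⁻¹ = V₀ − v₀^{1/2} + v₀^{−1/2}` -/
def V0i : H := V0 - c R5.v0h + c R5.v0hi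
/-- `V₁⁻¹ = V₁ − v₁^{1/2} + v₁^{−1/2}` -/
def V1i : H := V1 - c R5.v1h + c R5.v1hi
/-- `𝕏 = V₁⁻¹·U₁⁻¹` -/
def XX : H := V1i * U1i
/-- `𝕏⁻¹ = U₁·V₁` -/
def XXi : H := U1 * V1
/-- `𝕐 = U₀·U₁` -/
def YY : H := U0 * U1
/-- `𝕐⁻¹ = U₁⁻¹·U₀⁻¹` -/
def YYi : H := U1i * U0i

end H

open H

/-- `φ : H → H'` is semilinear over `θ : R → R` -/
def Semilin (θ : R5 ≃+* R5) (f : H → H) : Prop :=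
  ∀ r : R5, f (algebraMap R5 H r) = algebraMap R5 H (θ r)

/-- `θ_φ` interchanges `u₀^{1/2}` and `v₁^{1/2}` fixing `q^{1/4}, u₁^{1/2}, v₀^{1/2}`. -/
def ThetaPhi (θ : R5 ≃+* R5) : Prop :=
  θ R5.q4 = R5.q4 ∧ θ R5.u1h = R5.u1h ∧ θ R5.v0h = R5.v0h ∧
  θ R5.u0h = R5.v1h ∧ θ R5.v1h = R5.u0h

/-- `θ₊` interchanges `u₀^{1/2}` and `v₀^{1/2}`. -/
def ThetaPlus (θ : R5 ≃+* R5) : Prop :=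
  θ R5.q4 = R5.q4 ∧ θ R5.u1h = R5.u1h ∧ θ R5.v1h = R5.v1h ∧
  θ R5.u0h = R5.v0h ∧ θ R5.v0h = R5.u0h

/-- `θ₋` interchanges `v₀^{1/2}` and `v₁^{1/2}`. -/
def ThetaMinus (θ : R5 ≃+* R5) : Prop :=
  θ R5.q4 = R5.q4 ∧ θ R5.u0h = R5.u0h ∧ θ R5.u1h = R5.u1h ∧
  θ R5.v0h = R5.v1h ∧ θ R5.v1h = R5.v0h

/-- conditions on `φ`: a bijective, additive, unital, multiplication-reversing map,
semilinear over `θ_φ`, with the prescribed values on generators. -/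
def PhiMap (θ : R5 ≃+* R5) (f : H → H) : Prop :=
  Function.Bijective f ∧ (∀ a b : H, f (a + b) = f a + f b) ∧ f 1 = 1 ∧
  (∀ a b : H, f (a * b) = f b * f a) ∧ Semilin θ f ∧
  f U0 = V1 ∧ f V1 = U0 ∧ f U1 = U1 ∧ f V0 = V0

/-- defining conditions on `τ₊` -/
def TauPlus (θ : R5 ≃+* R5) (τ : H ≃+* H) : Prop :=
  Semilin θ τ ∧ τ U1 = U1 ∧ τ V1 = V1 ∧
  τ U0 = c R5.q4i * XX * U0i ∧ τ V0 = c R5.q4i * XX * V0i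

/-- defining conditions on `τ₋` -/
def TauMinus (θ : R5 ≃+* R5) (τ : H ≃+* H) : Prop :=
  Semilin θ τ ∧ τ U0 = U0 ∧ τ U1 = U1 ∧
  τ V1 = c R5.q4i * V1i * YYi ∧ τ V0 = V0i * V1 * V0

/-! The anti-automorphism is obtained by sending the generators to their prescribed images in
`Hᵐᵒᵖ`, with scalars twisted by `θ_φ`. The Hecke relations survive because `(T - a)(T + b) = 0`
implies `(T + b)(T - a) = 0` for central `a, b`, and the reversed unit relation
`q^{1/4} U₁ V₁ V₀ U₀ = 1` is a cyclic rotation of the original one, valid since `U₁` is invertible.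
Since scalars and the four generators generate `H`, uniqueness, `φ ∘ φ = id` and the conjugation
formulas reduce to a check on generators; there the conjugation formulas come down to
`V₁ V₀ = q^{-1/4} 𝕐⁻¹` and `V₀ U₀ = q^{-1/4} 𝕏`, two rearrangements of the unit relation. -/

theorem AddMonoidAlgebra.ringHom_ext_of_closure_eq_top {G S : Type*} [AddCommGroup G]
    [Semiring S] {s : Set G} (hs : AddSubgroup.closure s = ⊤)
    {f g : AddMonoidAlgebra ℤ G →+* S}
    (h : ∀ a ∈ s, f (AddMonoidAlgebra.single a 1) = g (AddMonoidAlgebra.single a 1)) : f = g := by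
  refine AddMonoidAlgebra.ringHom_ext' (RingHom.ext_int _ _) <|
    MonoidHom.eq_of_eqOn_dense (s := Multiplicative.toAdd ⁻¹' s) ?_ fun a ha => h _ ha
  rw [← AddSubgroup.toSubgroup_closure, hs]
  rfl

theorem AddMonoidAlgebra.single_mul_single_neg {k G : Type*} [Semiring k] [AddGroup G] (a : G) :
    (AddMonoidAlgebra.single a 1 : AddMonoidAlgebra k G) * AddMonoidAlgebra.single (-a) 1 = 1 := by
  rw [AddMonoidAlgebra.single_mul_single, add_neg_cancel, one_mul, AddMonoidAlgebra.one_def]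

section Hecke

variable {R A : Type*} [CommRing R] [Ring A] [Algebra R A] {x : A} {a b : R}

theorem mul_sub_add_eq_one_of_hecke
    (hx : (x - algebraMap R A a) * (x + algebraMap R A b) = 0) (hab : a * b = 1) :
    x * (x - algebraMap R A a + algebraMap R A b) = 1 := by
  calc _ = (x - algebraMap R A a) * (x + algebraMap R A b) + algebraMap R A (a * b) := by
        simp only [map_mul, mul_add, mul_sub, sub_mul, Algebra.commutes a x]
        abel
    _ = 1 := by rw [hx, hab, map_one, zero_add]

theorem sub_add_mul_eq_one_of_hecke
    (hx : (x - algebraMap R A a) * (x + algebraMap R A b) = 0) (hab : a * b = 1) :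
    (x - algebraMap R A a + algebraMap R A b) * x = 1 := by
  calc _ = (x - algebraMap R A a) * (x + algebraMap R A b) + algebraMap R A (a * b) := by
        simp only [map_mul, mul_add, sub_mul, add_mul, Algebra.commutes a x,
          Algebra.commutes b x]
        abel
    _ = 1 := by rw [hx, hab, map_one, zero_add]

theorem add_mul_sub_eq_zero_of_hecke
    (hx : (x - algebraMap R A a) * (x + algebraMap R A b) = 0) :
    (x + algebraMap R A b) * (x - algebraMap R A a) = 0 := by
  calc _ = (x - algebraMap R A a) * (x + algebraMap R A b) := by
        simp only [mul_add, mul_sub, sub_mul, add_mul, Algebra.commutes a x, Algebra.commutes b x,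
          ← map_mul, mul_comm a b]
        abel
    _ = 0 := hx

end Hecke

section SemilinearLift

variable {R S X B : Type*} [CommSemiring R] [CommSemiring S] [Semiring B] [Algebra S B]

def FreeAlgebra.semilinearLift (σ : R →+* S) (g : X → B) : FreeAlgebra R X →+* B :=
  letI := Algebra.compHom B σ
  (FreeAlgebra.lift R g).toRingHom

@[simp] theorem FreeAlgebra.semilinearLift_ι (σ : R →+* S) (g : X → B) (x : X) :
    FreeAlgebra.semilinearLift σ g (FreeAlgebra.ι R x) = g x :=
  letI := Algebra.compHom B σ
  FreeAlgebra.lift_ι_apply g x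

@[simp] theorem FreeAlgebra.semilinearLift_algebraMap (σ : R →+* S) (g : X → B) (r : R) :
    FreeAlgebra.semilinearLift σ g (algebraMap R _ r) = algebraMap S B (σ r) :=
  letI := Algebra.compHom B σ
  (FreeAlgebra.lift R g).commutes r

end SemilinearLift

namespace R5

theorem closure_basis : AddSubgroup.closure ({(1, 0, 0, 0, 0), (0, 1, 0, 0, 0), (0, 0, 1, 0, 0),
    (0, 0, 0, 1, 0), (0, 0, 0, 0, 1)} : Set (ℤ × ℤ × ℤ × ℤ × ℤ)) = ⊤ := by
  refine eq_top_iff.2 fun ⟨a, b, c, d, e⟩ _ => ?_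
  have : ((a, b, c, d, e) : ℤ × ℤ × ℤ × ℤ × ℤ) = a • (1, 0, 0, 0, 0) + b • (0, 1, 0, 0, 0) +
      c • (0, 0, 1, 0, 0) + d • (0, 0, 0, 1, 0) + e • (0, 0, 0, 0, 1) := by
    simp
  rw [this]
  refine add_mem (add_mem (add_mem (add_mem ?_ ?_) ?_) ?_) ?_ <;>
    exact zsmul_mem (AddSubgroup.subset_closure (by simp)) _

theorem ringHom_ext {S : Type*} [Semiring S] {f g : R5 →+* S}
    (hq : f q4 = g q4) (hu0 : f u0h = g u0h) (hu1 : f u1h = g u1h)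
    (hv0 : f v0h = g v0h) (hv1 : f v1h = g v1h) : f = g :=
  AddMonoidAlgebra.ringHom_ext_of_closure_eq_top closure_basis <| by
    simpa [or_imp, forall_and] using ⟨hq, hu0, hu1, hv0, hv1⟩

theorem q4_mul_q4i : q4 * q4i = 1 := AddMonoidAlgebra.single_mul_single_neg _
theorem u0h_mul_u0hi : u0h * u0hi = 1 := AddMonoidAlgebra.single_mul_single_neg _
theorem u1h_mul_u1hi : u1h * u1hi = 1 := AddMonoidAlgebra.single_mul_single_neg _
theorem v1h_mul_v1hi : v1h * v1hi = 1 := AddMonoidAlgebra.single_mul_single_neg _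

def swapU0V1 : (ℤ × ℤ × ℤ × ℤ × ℤ) ≃+ (ℤ × ℤ × ℤ × ℤ × ℤ) where
  toFun a := (a.1, a.2.2.2.2, a.2.2.1, a.2.2.2.1, a.2.1)
  invFun a := (a.1, a.2.2.2.2, a.2.2.1, a.2.2.2.1, a.2.1)
  left_inv _ := rfl
  right_inv _ := rfl
  map_add' _ _ := rfl

def thetaPhi : R5 ≃+* R5 := (AddMonoidAlgebra.domCongr ℤ ℤ swapU0V1).toRingEquiv

theorem thetaPhi_single (a : ℤ × ℤ × ℤ × ℤ × ℤ) (n : ℤ) :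
    thetaPhi (AddMonoidAlgebra.single a n) = AddMonoidAlgebra.single (swapU0V1 a) n :=
  AddMonoidAlgebra.domCongr_single (R := ℤ) (A := ℤ) swapU0V1 a n

@[simp] theorem thetaPhi_thetaPhi (r : R5) : thetaPhi (thetaPhi r) = r :=
  thetaPhi.symm_apply_apply r

@[simp] theorem thetaPhi_q4 : thetaPhi q4 = q4 := thetaPhi_single _ _
@[simp] theorem thetaPhi_q4i : thetaPhi q4i = q4i := thetaPhi_single _ _
@[simp] theorem thetaPhi_u0h : thetaPhi u0h = v1h := thetaPhi_single _ _
@[simp] theorem thetaPhi_u0hi : thetaPhi u0hi = v1hi := thetaPhi_single _ _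
@[simp] theorem thetaPhi_u1h : thetaPhi u1h = u1h := thetaPhi_single _ _
@[simp] theorem thetaPhi_u1hi : thetaPhi u1hi = u1hi := thetaPhi_single _ _
@[simp] theorem thetaPhi_v0h : thetaPhi v0h = v0h := thetaPhi_single _ _
@[simp] theorem thetaPhi_v0hi : thetaPhi v0hi = v0hi := thetaPhi_single _ _
@[simp] theorem thetaPhi_v1h : thetaPhi v1h = u0h := thetaPhi_single _ _
@[simp] theorem thetaPhi_v1hi : thetaPhi v1hi = u0hi := thetaPhi_single _ _

theorem thetaPhi_spec : ThetaPhi thetaPhi :=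
  ⟨thetaPhi_q4, thetaPhi_u1h, thetaPhi_v0h, thetaPhi_u0h, thetaPhi_v1h⟩

theorem eq_thetaPhi {θ : R5 ≃+* R5} (h : ThetaPhi θ) : θ = thetaPhi := by
  obtain ⟨hq, hu1, hv0, hu0, hv1⟩ := h
  exact RingEquiv.toRingHom_injective <| ringHom_ext (by simp [hq]) (by simp [hu0])
    (by simp [hu1]) (by simp [hv0]) (by simp [hv1])

theorem thetaPhi_thetaPlus_thetaPhi {θp θm : R5 ≃+* R5} (hp : ThetaPlus θp)
    (hm : ThetaMinus θm) (r : R5) : thetaPhi (θp (thetaPhi r)) = θm r := by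
  obtain ⟨hpq, hpu1, hpv1, hpu0, hpv0⟩ := hp
  obtain ⟨hmq, hmu0, hmu1, hmv0, hmv1⟩ := hm
  refine RingHom.congr_fun (f := (thetaPhi : R5 →+* R5).comp ((θp : R5 →+* R5).comp thetaPhi))
    (g := θm) (ringHom_ext ?_ ?_ ?_ ?_ ?_) r <;> simp [*]

theorem thetaPhi_thetaMinus_thetaPhi {θp θm : R5 ≃+* R5} (hp : ThetaPlus θp)
    (hm : ThetaMinus θm) (r : R5) : thetaPhi (θm (thetaPhi r)) = θp r := by
  obtain ⟨hpq, hpu1, hpv1, hpu0, hpv0⟩ := hp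
  obtain ⟨hmq, hmu0, hmu1, hmv0, hmv1⟩ := hm
  refine RingHom.congr_fun (f := (thetaPhi : R5 →+* R5).comp ((θm : R5 →+* R5).comp thetaPhi))
    (g := θp) (ringHom_ext ?_ ?_ ?_ ?_ ?_) r <;> simp [*]

end R5

theorem Semilin.map_c {θ : R5 ≃+* R5} {f : H → H} (h : Semilin θ f) (r : R5) :
    f (c r) = c (θ r) :=
  h r

namespace H

open R5 MulOpposite

theorem c_mul_comm (r : R5) (x : H) : c r * x = x * c r := Algebra.commutes r x

theorem c_q4i_mul_c_q4 : c q4i * c q4 = 1 := by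
  rw [c, c, ← map_mul, mul_comm, q4_mul_q4i, map_one]

theorem hecke_U0 : (U0 - c u0h) * (U0 + c u0hi) = 0 := by
  simpa [U0, c] using RingQuot.mkAlgHom_rel R5 Crel.heckeU0

theorem hecke_U1 : (U1 - c u1h) * (U1 + c u1hi) = 0 := by
  simpa [U1, c] using RingQuot.mkAlgHom_rel R5 Crel.heckeU1

theorem hecke_V0 : (V0 - c v0h) * (V0 + c v0hi) = 0 := by
  simpa [V0, c] using RingQuot.mkAlgHom_rel R5 Crel.heckeV0

theorem hecke_V1 : (V1 - c v1h) * (V1 + c v1hi) = 0 := by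
  simpa [V1, c] using RingQuot.mkAlgHom_rel R5 Crel.heckeV1

theorem q4_V1_V0_U0_U1_eq_one : c q4 * V1 * V0 * U0 * U1 = 1 := by
  simpa [U0, U1, V0, V1, c] using RingQuot.mkAlgHom_rel R5 Crel.unit

theorem U0_mul_U0i : U0 * U0i = 1 := mul_sub_add_eq_one_of_hecke (x := U0) hecke_U0 u0h_mul_u0hi
theorem U1_mul_U1i : U1 * U1i = 1 := mul_sub_add_eq_one_of_hecke (x := U1) hecke_U1 u1h_mul_u1hi
theorem V1i_mul_V1 : V1i * V1 = 1 := sub_add_mul_eq_one_of_hecke (x := V1) hecke_V1 v1h_mul_v1hi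

theorem V1_mul_V0 : V1 * V0 = c q4i * YYi := by
  calc V1 * V0 = c q4i * (c q4 * V1 * V0 * (U0 * (U1 * U1i) * U0i)) := by
        rw [U1_mul_U1i, mul_one, U0_mul_U0i, mul_one, ← mul_assoc, ← mul_assoc, c_q4i_mul_c_q4,
          one_mul]
    _ = c q4i * ((c q4 * V1 * V0 * U0 * U1) * YYi) := by simp only [YYi, mul_assoc]
    _ = c q4i * YYi := by rw [q4_V1_V0_U0_U1_eq_one, one_mul]

theorem V0_mul_U0 : V0 * U0 = c q4i * XX := by
  calc V0 * U0 = (c q4i * c q4) * (V1i * V1) * (V0 * U0) * (U1 * U1i) := by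
        rw [c_q4i_mul_c_q4, V1i_mul_V1, U1_mul_U1i, one_mul, one_mul, mul_one]
    _ = c q4i * V1i * (c q4 * V1 * V0 * U0 * U1) * U1i := by
        rw [mul_assoc (c q4i), ← mul_assoc (c q4), c_mul_comm q4 V1i]; simp only [mul_assoc]
    _ = c q4i * XX := by rw [q4_V1_V0_U0_U1_eq_one, mul_one, XX, mul_assoc]

theorem U1_V1_V0_U0_q4_eq_one : U1 * V1 * V0 * U0 * c q4 = 1 := by
  have h : c q4 * (V1 * V0 * U0) = U1i := by
    rw [← mul_assoc, ← mul_assoc]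
    exact left_inv_eq_right_inv q4_V1_V0_U0_U1_eq_one U1_mul_U1i
  calc U1 * V1 * V0 * U0 * c q4 = U1 * (c q4 * (V1 * V0 * U0)) := by
        rw [c_mul_comm]; simp only [mul_assoc]
    _ = 1 := by rw [h, U1_mul_U1i]

@[elab_as_elim]
theorem induction {P : H → Prop} (algebraMap : ∀ r, P (c r)) (U0 : P U0) (U1 : P U1)
    (V0 : P V0) (V1 : P V1) (add : ∀ x y, P x → P y → P (x + y))
    (mul : ∀ x y, P x → P y → P (x * y)) (x : H) : P x := by
  obtain ⟨x, rfl⟩ := RingQuot.mkAlgHom_surjective R5 Crel x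
  induction x using FreeAlgebra.induction with
  | grade0 r => simpa [c] using algebraMap r
  | grade1 g => cases g <;> assumption
  | mul a b ha hb => rw [map_mul]; exact mul _ _ ha hb
  | add a b ha hb => rw [map_add]; exact add _ _ ha hb

def phiGen : Cgen → Hᵐᵒᵖ
  | .u0 => op V1
  | .u1 => op U1
  | .v0 => op V0
  | .v1 => op U0

theorem semilinearLift_phiGen_rel ⦃x y : FreeAlgebra R5 Cgen⦄ (h : Crel x y) :
    FreeAlgebra.semilinearLift (thetaPhi : R5 →+* R5) phiGen x =
      FreeAlgebra.semilinearLift (thetaPhi : R5 →+* R5) phiGen y := by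
  apply unop_injective
  cases h with
  | heckeU0 => simpa [phiGen] using add_mul_sub_eq_zero_of_hecke (x := V1) hecke_V1
  | heckeU1 => simpa [phiGen] using add_mul_sub_eq_zero_of_hecke (x := U1) hecke_U1
  | heckeV0 => simpa [phiGen] using add_mul_sub_eq_zero_of_hecke (x := V0) hecke_V0
  | heckeV1 => simpa [phiGen] using add_mul_sub_eq_zero_of_hecke (x := U0) hecke_U0
  | unit => simpa [phiGen, c, mul_assoc] using U1_V1_V0_U0_q4_eq_one

def phiOp : H →+* Hᵐᵒᵖ :=
  RingQuot.lift ⟨FreeAlgebra.semilinearLift (thetaPhi : R5 →+* R5) phiGen,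
    semilinearLift_phiGen_rel⟩

def phi (x : H) : H := unop (phiOp x)

theorem phi_mkAlgHom (x : FreeAlgebra R5 Cgen) :
    phi (RingQuot.mkAlgHom R5 Crel x) =
      unop (FreeAlgebra.semilinearLift (thetaPhi : R5 →+* R5) phiGen x) := by
  have : RingQuot.mkAlgHom R5 Crel x = RingQuot.mkRingHom Crel x := by
    rw [← RingQuot.mkAlgHom_coe R5]; rfl
  rw [phi, this, phiOp, RingQuot.lift_mkRingHom_apply]

@[simp] theorem phi_add (x y : H) : phi (x + y) = phi x + phi y := by simp [phi]
@[simp] theorem phi_mul (x y : H) : phi (x * y) = phi y * phi x := by simp [phi]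
@[simp] theorem phi_one : phi 1 = 1 := by simp [phi]

-- `H`'s subtraction is `RingQuot.instSub`, not reducibly the one `map_sub` expects.
@[simp] theorem phi_sub (x y : H) : phi (x - y) = phi x - phi y :=
  congrArg unop (map_sub phiOp x y)

@[simp] theorem phi_c (r : R5) : phi (c r) = c (thetaPhi r) := by
  rw [c, ← (RingQuot.mkAlgHom R5 Crel).commutes, phi_mkAlgHom]; simp [c]

@[simp] theorem phi_U0 : phi U0 = V1 :=
  (phi_mkAlgHom (FreeAlgebra.ι R5 .u0)).trans (by simp [phiGen])

@[simp] theorem phi_U1 : phi U1 = U1 :=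
  (phi_mkAlgHom (FreeAlgebra.ι R5 .u1)).trans (by simp [phiGen])

@[simp] theorem phi_V0 : phi V0 = V0 :=
  (phi_mkAlgHom (FreeAlgebra.ι R5 .v0)).trans (by simp [phiGen])

@[simp] theorem phi_V1 : phi V1 = U0 :=
  (phi_mkAlgHom (FreeAlgebra.ι R5 .v1)).trans (by simp [phiGen])

@[simp] theorem phi_U0i : phi U0i = V1i := by simp [U0i, V1i]
@[simp] theorem phi_U1i : phi U1i = U1i := by simp [U1i]
@[simp] theorem phi_V0i : phi V0i = V0i := by simp [V0i]
@[simp] theorem phi_V1i : phi V1i = U0i := by simp [U0i, V1i]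

theorem phi_XX : phi XX = YYi := by simp [XX, YYi]
theorem phi_YY : phi YY = XXi := by simp [XXi, YY]
theorem phi_YYi : phi YYi = XX := by simp [XX, YYi]

theorem phi_phi (x : H) : phi (phi x) = x := by
  induction x using H.induction with
  | algebraMap r => simp
  | U0 | U1 | V0 | V1 => simp
  | add x y hx hy | mul x y hx hy => simp [hx, hy]

theorem phiMap_phi : PhiMap thetaPhi phi :=
  ⟨Function.Involutive.bijective phi_phi, phi_add, phi_one, phi_mul, phi_c, phi_U0, phi_V1,
    phi_U1, phi_V0⟩

theorem eq_phi {f : H → H} (hf : PhiMap thetaPhi f) : f = phi := by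
  obtain ⟨-, hadd, -, hmul, hc, hU0, hV1, hU1, hV0⟩ := hf
  funext x
  induction x using H.induction with
  | algebraMap r => rw [hc.map_c, phi_c]
  | U0 => simp [hU0]
  | U1 => simp [hU1]
  | V0 => simp [hV0]
  | V1 => simp [hV1]
  | add x y hx hy => simp [hadd, hx, hy]
  | mul x y hx hy => simp [hmul, hx, hy]

variable {θp θm : R5 ≃+* R5} {τp τm : H ≃+* H}

theorem phi_tauPlus_phi (hθp : ThetaPlus θp) (hθm : ThetaMinus θm) (hτp : TauPlus θp τp)
    (hτm : TauMinus θm τm) (x : H) : phi (τp (phi x)) = τm x := by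
  obtain ⟨hcp, hU1p, hV1p, hU0p, hV0p⟩ := hτp
  obtain ⟨hcm, hU0m, hU1m, hV1m, hV0m⟩ := hτm
  induction x using H.induction with
  | algebraMap r =>
    rw [phi_c, hcp.map_c, phi_c, thetaPhi_thetaPlus_thetaPhi hθp hθm, hcm.map_c]
  | U0 => simp [hV1p, hU0m]
  | U1 => simp [hU1p, hU1m]
  | V0 =>
    simp only [phi_V0, hV0p, hV0m, phi_mul, phi_V0i, phi_XX, phi_c, thetaPhi_q4i, mul_assoc,
      V1_mul_V0, c_mul_comm]
  | V1 =>
    simp only [phi_V1, hU0p, hV1m, phi_mul, phi_U0i, phi_XX, phi_c, thetaPhi_q4i, mul_assoc,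
      c_mul_comm]
  | add x y hx hy => simp [hx, hy]
  | mul x y hx hy => simp [hx, hy]

theorem phi_tauMinus_phi (hθp : ThetaPlus θp) (hθm : ThetaMinus θm) (hτp : TauPlus θp τp)
    (hτm : TauMinus θm τm) (x : H) : phi (τm (phi x)) = τp x := by
  obtain ⟨hcp, hU1p, hV1p, hU0p, hV0p⟩ := hτp
  obtain ⟨hcm, hU0m, hU1m, hV1m, hV0m⟩ := hτm
  induction x using H.induction with
  | algebraMap r =>
    rw [phi_c, hcm.map_c, phi_c, thetaPhi_thetaMinus_thetaPhi hθp hθm, hcp.map_c]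
  | U0 =>
    simp only [phi_U0, hV1m, hU0p, phi_mul, phi_V1i, phi_YYi, phi_c, thetaPhi_q4i, mul_assoc,
      c_mul_comm]
  | U1 => simp [hU1p, hU1m]
  | V0 =>
    simp only [phi_V0, hV0m, hV0p, phi_mul, phi_V1, phi_V0i, ← mul_assoc, V0_mul_U0]
  | V1 => simp [hU0m, hV1p]
  | add x y hx hy => simp [hx, hy]
  | mul x y hx hy => simp [hx, hy]

end H

/-- there is a unique ring anti-automorphism `φ` of `H`, semilinear over
`θ_φ`, with `φ(U₀) = V₁`, `φ(V₁) = U₀`, `φ(U₁) = U₁`, `φ(V₀) = V₀`; it satisfies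
`φ(𝕏) = 𝕐⁻¹`, `φ(𝕐) = 𝕏⁻¹`, `φ ∘ φ = id`, `φ ∘ τ₊ ∘ φ = τ₋`, `φ ∘ τ₋ ∘ φ = τ₊`. -/
theorem statement11 :
    (∃! θ : R5 ≃+* R5, ThetaPhi θ) ∧
    ∀ θ : R5 ≃+* R5, ThetaPhi θ →
      (∃! f : H → H, PhiMap θ f) ∧
      ∀ f : H → H, PhiMap θ f →
        f XX = YYi ∧ f YY = XXi ∧ (∀ x : H, f (f x) = x) ∧
        (∀ (θp θm : R5 ≃+* R5) (τp τm : H ≃+* H),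
          ThetaPlus θp → ThetaMinus θm → TauPlus θp τp → TauMinus θm τm →
          (∀ x : H, f (τp (f x)) = τm x) ∧ (∀ x : H, f (τm (f x)) = τp x)) := by
  refine ⟨⟨R5.thetaPhi, R5.thetaPhi_spec, fun _ => R5.eq_thetaPhi⟩, fun θ hθ => ?_⟩
  obtain rfl := R5.eq_thetaPhi hθ
  refine ⟨⟨phi, phiMap_phi, fun _ => eq_phi⟩, fun f hf => ?_⟩
  obtain rfl := eq_phi hf
  exact ⟨phi_XX, phi_YY, phi_phi, fun _ _ _ _ hθp hθm hτp hτm =>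
    ⟨phi_tauPlus_phi hθp hθm hτp hτm, phi_tauMinus_phi hθp hθm hτp hτm⟩⟩
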